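/- Let G be a group with finite generating set A whose Cayley graph is Morse local-to-global, and let M be a Morse gauge with associated local scale B_M and regular language L_M of (B_M; M)-locally Morse geodesic words. Then the language Q_M = { (u,v) ∈ (A × A)* : u, v ∈ L_M and u, v represent the same element of G } is regular. -/

import Mathlib

open Classical

/-- Evaluation in `G` of a word over the alphabet `A`. -/
def wordEval {G : Type} [Group G] {A : Type} (π : A → G) (w : List A) : G :=
  (w.map π).prod

/-- `π : A → G` generates `G` (positive words suffice; the generating set is
assumed symmetric, see `SymmetricGen`). -/
def Generates {G : Type} [Group G] {A : Type} (π : A → G) : Prop :=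
  ∀ g : G, ∃ w : List A, wordEval π w = g

/-- The generating set is symmetric: `A = A⁻¹`. -/
def SymmetricGen {G : Type} [Group G] {A : Type} (π : A → G) : Prop :=
  ∀ a : A, ∃ b : A, π b = (π a)⁻¹

/-- The word length of `g` with respect to the generating map `π`. -/
noncomputable def wordLength {G : Type} [Group G] {A : Type} (π : A → G) (g : G) : ℕ :=
  sInf {n : ℕ | ∃ w : List A, w.length = n ∧ wordEval π w = g}

/-- The word metric on `G` induced by the generating map `π`. -/
noncomputable def wordDist {G : Type} [Group G] {A : Type} (π : A → G) (g h : G) : ℕ :=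
  wordLength π (g⁻¹ * h)

/-- A Morse gauge: a function `M : (k, c) ↦ M(k,c)`. -/
def MorseGauge : Type := ℝ → ℝ → ℝ

/-- `q : {0,…,n} → G` is a discrete `(k,c)`-quasi-geodesic in the Cayley
graph of `G` with respect to `π`. -/
noncomputable def IsDiscreteQG {G : Type} [Group G] {A : Type} (π : A → G)
    (k c : ℝ) (q : ℕ → G) (n : ℕ) : Prop :=
  ∀ i ≤ n, ∀ j ≤ n,
    (1 / k) * |(i : ℝ) - (j : ℝ)| - c ≤ (wordDist π (q i) (q j) : ℝ) ∧
    (wordDist π (q i) (q j) : ℝ) ≤ k * |(i : ℝ) - (j : ℝ)| + c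

/-- `q : {0,…,n} → G` is a discrete geodesic in the Cayley graph. -/
def IsDiscreteGeodesic {G : Type} [Group G] {A : Type} (π : A → G)
    (q : ℕ → G) (n : ℕ) : Prop :=
  ∀ i ≤ n, ∀ j ≤ n, wordDist π (q i) (q j) = Nat.dist i j

/-- The discrete path `q : {0,…,n} → G` is `M`-Morse: every discrete
`(k,c)`-quasi-geodesic with endpoints on `q` stays within `M k c` of the
subsegment of `q` between those endpoints. -/
def IsMorsePath {G : Type} [Group G] {A : Type} (π : A → G)
    (M : MorseGauge) (q : ℕ → G) (n : ℕ) : Prop :=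
  ∀ k c : ℝ, 1 ≤ k → 0 ≤ c →
    ∀ (p : ℕ → G) (m : ℕ), IsDiscreteQG π k c p m →
      ∀ i j : ℕ, i ≤ j → j ≤ n → p 0 = q i → p m = q j →
        ∀ l ≤ m, ∃ i' : ℕ, i ≤ i' ∧ i' ≤ j ∧ (wordDist π (p l) (q i') : ℝ) ≤ M k c

/-- The path in the Cayley graph labeled by the word `w`, starting at the
identity: `i ↦` the evaluation of the `i`-th prefix of `w`. -/
def wordPath {G : Type} [Group G] {A : Type} (π : A → G) (w : List A) (i : ℕ) : G :=
  wordEval π (w.take i)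

/-- `w` is a geodesic word: its length realizes the word length of the element
it represents. -/
def IsGeodesicWord {G : Type} [Group G] {A : Type} (π : A → G) (w : List A) : Prop :=
  w.length = wordLength π (wordEval π w)

/-- The path labeled by `w` is a `(B; M)`-local Morse geodesic: every subpath
of length at most `B` is an `M`-Morse (geodesic) path. -/
def IsLocalMorseWord {G : Type} [Group G] {A : Type} (π : A → G)
    (M : MorseGauge) (B : ℝ) (w : List A) : Prop :=
  ∀ i j : ℕ, i ≤ j → j ≤ w.length → (j : ℝ) - (i : ℝ) ≤ B →
    IsMorsePath π M (fun t => wordPath π w (i + t)) (j - i)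

/-- `q : {0,…,n} → G` is a `(B; M; k, c)`-local Morse quasi-geodesic. -/
noncomputable def IsLocalMorseQG {G : Type} [Group G] {A : Type} (π : A → G)
    (B : ℝ) (M : MorseGauge) (k c : ℝ) (q : ℕ → G) (n : ℕ) : Prop :=
  ∀ i j : ℕ, i ≤ j → j ≤ n → (j : ℝ) - (i : ℝ) ≤ B →
    IsDiscreteQG π k c (fun t => q (i + t)) (j - i) ∧
    IsMorsePath π M (fun t => q (i + t)) (j - i)

/-- The Cayley graph of `G` with respect to `π` has the Morse local-to-global
property: local Morse quasi-geodesics of sufficiently large local scale are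
global Morse quasi-geodesics. -/
noncomputable def MorseLocalToGlobal {G : Type} [Group G] {A : Type} (π : A → G) : Prop :=
  ∀ (M : MorseGauge) (k c : ℝ), 1 ≤ k → 0 ≤ c →
    ∃ (B : ℝ) (M' : MorseGauge) (k' c' : ℝ), 0 ≤ B ∧ 1 ≤ k' ∧ 0 ≤ c' ∧
      ∀ (q : ℕ → G) (n : ℕ), IsLocalMorseQG π B M k c q n →
        IsDiscreteQG π k' c' q n ∧ IsMorsePath π M' q n

/-!
By Myhill–Nerode it suffices to bound the number of left quotients. Words of `L_M` are
`M'`-Morse geodesics, so a geodesic ending next to such a word passes close to each of its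
points; in particular two words of `L_M` with a common endpoint fellow-travel. Hence, as in
Cannon's cone-type argument, the continuations of `w ∈ L_M` are determined by its last `⌈B⌉`
letters (for the local Morse condition) and by `h ↦ |w̄ h| - |w̄|` on a ball of fixed radius (for
geodesicity), and `L_M` is regular. For a prefix `(u, v)` of a pair in `Q_M`, fellow travelling
puts `ū⁻¹ v̄` in a fixed ball, and this element together with the left quotients of `L_M` by `u`
and `v` determines the left quotient of `Q_M` by `(u, v)`.
-/

theorem List.exists_eq_append_append_of_le {α : Type} {w : List α} {i j : ℕ} (hij : i ≤ j)
    (hj : j ≤ w.length) :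
    ∃ u s v : List α, w = u ++ s ++ v ∧ u.length = i ∧ (u ++ s).length = j := by
  refine ⟨(w.take j).take i, (w.take j).drop i, w.drop j, ?_, ?_, ?_⟩ <;>
    simp [List.length_take, Nat.min_eq_left hij, Nat.min_eq_left hj]

theorem exists_le_le_add_of_succ_le_add {f : ℕ → ℕ} {D s : ℕ} :
    ∀ {m : ℕ}, (∀ l < m, f (l + 1) ≤ f l + D) → f 0 ≤ s → s ≤ f m →
      ∃ l ≤ m, f l ≤ s ∧ s ≤ f l + D
  | 0, _, h0, hm => ⟨0, le_rfl, h0, hm.trans (Nat.le_add_right _ _)⟩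
  | m + 1, hstep, h0, hm => by
    by_cases hs : s ≤ f m
    · obtain ⟨l, hl, h⟩ := exists_le_le_add_of_succ_le_add
        (fun l hl => hstep l (Nat.lt_succ_of_lt hl)) h0 hs
      exact ⟨l, Nat.le_succ_of_le hl, h⟩
    · exact ⟨m, Nat.le_succ m, by omega, hm.trans (hstep m (Nat.lt_succ_self m))⟩

theorem Language.isRegular_of_finite_range {α β : Type} {L : Language α} (f : List α → β)
    (hf : (Set.range f).Finite) (h : ∀ x y z, f x = f y → x ++ z ∈ L → y ++ z ∈ L) :
    L.IsRegular := by
  have hq : ∀ x y, Setoid.ker f x y → L.leftQuotient x = L.leftQuotient y :=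
    fun x y hxy => Set.ext fun z => ⟨h x y z hxy, h y x z hxy.symm⟩
  have : Finite (Set.range f) := hf.to_subtype
  have : Finite (Quotient (Setoid.ker f)) := .of_equiv _ (Setoid.quotientKerEquivRange f).symm
  refine .of_finite_range_leftQuotient ?_
  rw [← Set.range_quotient_lift (s := Setoid.ker f) hq]
  exact Set.finite_range _

section WordMetric

variable {G : Type} [Group G] {A : Type} {π : A → G}

variable (π) in
theorem wordEval_append (u v : List A) :
    wordEval π (u ++ v) = wordEval π u * wordEval π v := by
  simp [wordEval]

theorem wordLength_le_length {w : List A} {g : G} (h : wordEval π w = g) :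
    wordLength π g ≤ w.length :=
  Nat.sInf_le ⟨w, rfl, h⟩

theorem exists_isGeodesicWord (hgen : Generates π) (g : G) :
    ∃ w : List A, IsGeodesicWord π w ∧ wordEval π w = g := by
  obtain ⟨w, hw, rfl⟩ := Nat.sInf_mem (s := {n | ∃ w : List A, w.length = n ∧ wordEval π w = g})
    (let ⟨w, hw⟩ := hgen g; ⟨w.length, w, rfl, hw⟩)
  exact ⟨w, hw, rfl⟩

theorem wordLength_mul_le (hgen : Generates π) (g h : G) :
    wordLength π (g * h) ≤ wordLength π g + wordLength π h := by
  obtain ⟨u, hu, rfl⟩ := exists_isGeodesicWord hgen g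
  obtain ⟨v, hv, rfl⟩ := exists_isGeodesicWord hgen h
  calc wordLength π (wordEval π u * wordEval π v) ≤ (u ++ v).length :=
        wordLength_le_length (wordEval_append π u v)
    _ = _ := by rw [List.length_append, ← hu, ← hv]

theorem wordLength_inv (hgen : Generates π) (hsym : SymmetricGen π) (g : G) :
    wordLength π g⁻¹ = wordLength π g := by
  have key : ∀ x : G, wordLength π x⁻¹ ≤ wordLength π x := by
    intro x
    obtain ⟨u, hu, rfl⟩ := exists_isGeodesicWord hgen x
    choose b hb using hsym
    calc wordLength π (wordEval π u)⁻¹ ≤ (u.map b).reverse.length :=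
          wordLength_le_length (by simp [wordEval, List.prod_inv_reverse, Function.comp_def, hb])
      _ = wordLength π (wordEval π u) := by rw [List.length_reverse, List.length_map, hu]
  exact le_antisymm (key g) (by simpa using key g⁻¹)

theorem wordDist_comm (hgen : Generates π) (hsym : SymmetricGen π) (g h : G) :
    wordDist π g h = wordDist π h g := by
  rw [wordDist, wordDist, ← wordLength_inv hgen hsym, mul_inv_rev, inv_inv]

theorem wordDist_triangle (hgen : Generates π) (g k h : G) :
    wordDist π g h ≤ wordDist π g k + wordDist π k h := by
  simpa [wordDist, mul_assoc] using wordLength_mul_le hgen (g⁻¹ * k) (k⁻¹ * h)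

variable (π) in
theorem wordDist_mul_left (g x y : G) : wordDist π (g * x) (g * y) = wordDist π x y := by
  simp [wordDist, mul_assoc]

variable (π) in
theorem wordDist_one_left (x : G) : wordDist π 1 x = wordLength π x := by
  simp [wordDist]

end WordMetric

section GeodesicWords

variable {G : Type} [Group G] {A : Type} {π : A → G}

variable (π) in
theorem wordPath_zero (w : List A) : wordPath π w 0 = 1 := by
  simp [wordPath, wordEval]

variable (π) in
theorem wordPath_of_length_le {w : List A} {i : ℕ} (h : w.length ≤ i) :
    wordPath π w i = wordEval π w := by
  simp [wordPath, List.take_of_length_le h]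

variable (π) in
theorem wordPath_append_of_le {u v : List A} {i : ℕ} (h : i ≤ u.length) :
    wordPath π (u ++ v) i = wordPath π u i := by
  simp [wordPath, List.take_append_of_le_length h]

variable (π) in
theorem wordPath_append_length_add (u v : List A) (t : ℕ) :
    wordPath π (u ++ v) (u.length + t) = wordEval π u * wordPath π v t := by
  simp [wordPath, List.take_append, wordEval_append, List.take_of_length_le]

variable (π) in
theorem wordDist_wordPath_append_append (u s v : List A) :
    wordDist π (wordPath π (u ++ s ++ v) u.length) (wordPath π (u ++ s ++ v) (u ++ s).length) =
      wordLength π (wordEval π s) := by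
  rw [List.append_assoc, List.length_append, ← Nat.add_zero u.length, wordPath_append_length_add,
    Nat.add_zero, wordPath_append_length_add, wordDist_mul_left, wordPath_zero,
    wordDist_one_left, ← Nat.add_zero s.length, wordPath_append_length_add, wordPath_zero, mul_one]

theorem wordDist_wordPath_le (w : List A) {i j : ℕ} (hij : i ≤ j) (hj : j ≤ w.length) :
    wordDist π (wordPath π w i) (wordPath π w j) ≤ j - i := by
  obtain ⟨u, s, v, rfl, rfl, rfl⟩ := List.exists_eq_append_append_of_le hij hj
  rw [wordDist_wordPath_append_append, List.length_append, Nat.add_sub_cancel_left]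
  exact wordLength_le_length rfl

theorem isGeodesicWord_iff_length_le {w : List A} :
    IsGeodesicWord π w ↔ w.length ≤ wordLength π (wordEval π w) :=
  ⟨le_of_eq, fun h => le_antisymm h (wordLength_le_length rfl)⟩

theorem IsGeodesicWord.length_le {w w' : List A} (hw : IsGeodesicWord π w)
    (h : wordEval π w' = wordEval π w) : w.length ≤ w'.length :=
  hw.trans_le (wordLength_le_length h)

theorem IsGeodesicWord.infix (hgen : Generates π) {w s : List A} (hw : IsGeodesicWord π w)
    (hs : s <:+: w) : IsGeodesicWord π s := by
  obtain ⟨u, v, rfl⟩ := hs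
  obtain ⟨s₀, hs₀, he⟩ := exists_isGeodesicWord hgen (wordEval π s)
  have hle := hw.length_le (w' := u ++ s₀ ++ v) (by simp only [wordEval_append, he])
  simp only [List.length_append] at hle
  rw [isGeodesicWord_iff_length_le, ← he, ← hs₀]
  omega

theorem IsGeodesicWord.wordDist_wordPath (hgen : Generates π) {w : List A}
    (hw : IsGeodesicWord π w) {i j : ℕ} (hij : i ≤ j) (hj : j ≤ w.length) :
    wordDist π (wordPath π w i) (wordPath π w j) = j - i := by
  obtain ⟨u, s, v, rfl, rfl, rfl⟩ := List.exists_eq_append_append_of_le hij hj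
  rw [wordDist_wordPath_append_append, List.length_append, Nat.add_sub_cancel_left,
    ← hw.infix hgen (List.infix_append u s v)]

theorem IsGeodesicWord.isDiscreteGeodesic (hgen : Generates π) (hsym : SymmetricGen π)
    {w : List A} (hw : IsGeodesicWord π w) : IsDiscreteGeodesic π (wordPath π w) w.length := by
  intro i hi j hj
  rcases le_total i j with hij | hji
  · rw [hw.wordDist_wordPath hgen hij hj, Nat.dist_eq_sub_of_le hij]
  · rw [wordDist_comm hgen hsym, hw.wordDist_wordPath hgen hji hi, Nat.dist_eq_sub_of_le_right hji]

theorem IsGeodesicWord.wordLength_wordPath (hgen : Generates π) {w : List A}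
    (hw : IsGeodesicWord π w) {i : ℕ} (hi : i ≤ w.length) : wordLength π (wordPath π w i) = i := by
  rw [← wordDist_one_left, ← wordPath_zero π w, hw.wordDist_wordPath hgen (Nat.zero_le i) hi,
    Nat.sub_zero]

end GeodesicWords

section QuasiGeodesics

variable {G : Type} [Group G] {A : Type} {π : A → G}

theorem isDiscreteQG_one_of_le (hgen : Generates π) (hsym : SymmetricGen π) {q : ℕ → G}
    {n c : ℕ} (h : ∀ i j, i ≤ j → j ≤ n →
      wordDist π (q i) (q j) ≤ j - i + c ∧ j - i ≤ wordDist π (q i) (q j) + c) :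
    IsDiscreteQG π 1 c q n := by
  intro i hi j hj
  wlog hij : i ≤ j generalizing i j
  · rw [wordDist_comm hgen hsym, abs_sub_comm]
    exact this j hj i hi (le_of_not_ge hij)
  obtain ⟨h₁, h₂⟩ := h i j hij hj
  rw [abs_sub_comm, abs_of_nonneg (sub_nonneg.mpr (Nat.cast_le.mpr hij)), div_one, one_mul,
    ← Nat.cast_sub hij]
  have h₂' : ((j - i : ℕ) : ℝ) ≤ wordDist π (q i) (q j) + c := by exact_mod_cast h₂
  exact ⟨by linarith, by exact_mod_cast h₁⟩

theorem IsGeodesicWord.isDiscreteQG (hgen : Generates π) (hsym : SymmetricGen π) {w : List A}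
    (hw : IsGeodesicWord π w) (c : ℕ) : IsDiscreteQG π 1 c (wordPath π w) w.length :=
  isDiscreteQG_one_of_le hgen hsym fun i j hij hj => by
    rw [hw.wordDist_wordPath hgen hij hj]
    omega

theorem IsGeodesicWord.isDiscreteQG_append (hgen : Generates π) (hsym : SymmetricGen π)
    {z : List A} (hz : IsGeodesicWord π z) (y : List A) :
    IsDiscreteQG π 1 (2 * y.length : ℕ) (wordPath π (z ++ y)) (z ++ y).length := by
  refine isDiscreteQG_one_of_le hgen hsym fun i j hij hj => ⟨?_, ?_⟩
  · have := wordDist_wordPath_le (π := π) _ hij hj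
    omega
  · -- compare with the geodesic `z` at the times clamped to `z.length`
    rw [List.length_append] at hj
    have hz' : wordDist π (wordPath π (z ++ y) (min i z.length))
        (wordPath π (z ++ y) (min j z.length)) = min j z.length - min i z.length := by
      rw [wordPath_append_of_le π (min_le_right _ _), wordPath_append_of_le π (min_le_right _ _),
        hz.wordDist_wordPath hgen (min_le_min_right _ hij) (min_le_right _ _)]
    have hi' := wordDist_wordPath_le (π := π) (z ++ y) (min_le_left i z.length) (by simp; omega)
    have hj' := wordDist_wordPath_le (π := π) (z ++ y) (min_le_left j z.length) (by simp; omega)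
    rw [wordDist_comm hgen hsym] at hj'
    have t₁ := wordDist_triangle hgen (wordPath π (z ++ y) (min i z.length))
      (wordPath π (z ++ y) i) (wordPath π (z ++ y) (min j z.length))
    have t₂ := wordDist_triangle hgen (wordPath π (z ++ y) i) (wordPath π (z ++ y) j)
      (wordPath π (z ++ y) (min j z.length))
    omega

end QuasiGeodesics

section MorsePaths

variable {G : Type} [Group G] {A : Type} {π : A → G} {M : MorseGauge}

theorem IsMorsePath.congr {q q' : ℕ → G} {n : ℕ} (h : IsMorsePath π M q n)
    (hqq : ∀ t ≤ n, q t = q' t) : IsMorsePath π M q' n := by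
  intro k c hk hc p m hp i j hij hjn h0 hm l hl
  obtain ⟨i', h₁, h₂, h₃⟩ := h k c hk hc p m hp i j hij hjn
    (by rw [h0, hqq i (hij.trans hjn)]) (by rw [hm, hqq j hjn]) l hl
  exact ⟨i', h₁, h₂, by rwa [← hqq i' (h₂.trans hjn)]⟩

theorem IsMorsePath.mul_left {q : ℕ → G} {n : ℕ} (h : IsMorsePath π M q n) (g : G) :
    IsMorsePath π M (fun t => g * q t) n := by
  intro k c hk hc p m hp i j hij hjn h0 hm l hl
  have hp' : IsDiscreteQG π k c (fun t => g⁻¹ * p t) m := by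
    simpa only [IsDiscreteQG, wordDist_mul_left] using hp
  obtain ⟨i', h₁, h₂, h₃⟩ := h k c hk hc _ m hp' i j hij hjn
    (by simp [h0]) (by simp [hm]) l hl
  refine ⟨i', h₁, h₂, ?_⟩
  rwa [← wordDist_mul_left π g⁻¹, inv_mul_cancel_left]

theorem isMorsePath_mul_left_iff {q : ℕ → G} {n : ℕ} (g : G) :
    IsMorsePath π M (fun t => g * q t) n ↔ IsMorsePath π M q n :=
  ⟨fun h => by simpa using h.mul_left g⁻¹, fun h => h.mul_left g⟩

theorem IsMorsePath.exists_wordDist_le {q : ℕ → G} {n : ℕ} (h : IsMorsePath π M q n)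
    {k c : ℝ} (hk : 1 ≤ k) (hc : 0 ≤ c) {p : ℕ → G} {m : ℕ} (hp : IsDiscreteQG π k c p m)
    (h0 : p 0 = q 0) (hm : p m = q n) {l : ℕ} (hl : l ≤ m) :
    ∃ i ≤ n, wordDist π (p l) (q i) ≤ ⌈M k c⌉₊ := by
  obtain ⟨i, -, hi, hd⟩ := h k c hk hc p m hp 0 n (Nat.zero_le n) le_rfl h0 hm l hl
  exact ⟨i, hi, Nat.cast_le.mp (hd.trans (Nat.le_ceil _))⟩

end MorsePaths

section MorseGeodesics

variable {G : Type} [Group G] {A : Type} {π : A → G} {M : MorseGauge}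

/-- By the Morse property each `u l` lies within `E = ⌈M 1 2⌉₊` of some `v (f l)`; the
projections `f l` start near `0`, end near `v.length` and advance by at most `2E + 1`, so one of
them lands just below `s`. -/
theorem IsGeodesicWord.exists_wordDist_wordPath_le (hgen : Generates π) (hsym : SymmetricGen π)
    {v u : List A} (hv : IsGeodesicWord π v) (hmv : IsMorsePath π M (wordPath π v) v.length)
    (hu : IsDiscreteQG π 1 2 (wordPath π u) u.length) (he : wordEval π u = wordEval π v)
    {s : ℕ} (hs : s ≤ v.length) :
    ∃ l ≤ u.length, wordDist π (wordPath π v s) (wordPath π u l) ≤ 3 * ⌈M 1 2⌉₊ + 1 := by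
  set E := ⌈M 1 2⌉₊
  have hend : wordPath π u u.length = wordPath π v v.length := by
    rw [wordPath_of_length_le π le_rfl, wordPath_of_length_le π le_rfl, he]
  have hproj : ∀ l, ∃ i, l ≤ u.length →
      i ≤ v.length ∧ wordDist π (wordPath π v i) (wordPath π u l) ≤ E := by
    intro l
    by_cases hl : l ≤ u.length
    · obtain ⟨i, hi, hd⟩ := hmv.exists_wordDist_le le_rfl zero_le_two hu
        (by rw [wordPath_zero, wordPath_zero]) hend hl
      exact ⟨i, fun _ => ⟨hi, by rwa [wordDist_comm hgen hsym]⟩⟩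
    · exact ⟨0, fun h => absurd h hl⟩
  choose f hf using hproj
  have hvd := hv.isDiscreteGeodesic hgen hsym
  have hnear : ∀ l ≤ u.length, ∀ i ≤ v.length,
      wordDist π (wordPath π v i) (wordPath π u l) ≤ Nat.dist i (f l) + E := by
    intro l hl i hi
    have := wordDist_triangle hgen (wordPath π v i) (wordPath π v (f l)) (wordPath π u l)
    rw [hvd i hi (f l) (hf l hl).1] at this
    exact this.trans (Nat.add_le_add_left (hf l hl).2 _)
  have hf₀ : f 0 ≤ E := by
    have := (hf 0 (Nat.zero_le _)).2
    rwa [wordPath_zero, ← wordPath_zero π v, hvd _ (hf 0 (Nat.zero_le _)).1 0 (Nat.zero_le _),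
      Nat.dist_zero_right] at this
  have hf₁ : v.length ≤ f u.length + E := by
    have := (hf u.length le_rfl).2
    rw [hend, hvd _ (hf u.length le_rfl).1 _ le_rfl] at this
    have := Nat.dist_tri_right (f u.length) v.length
    omega
  have hstep : ∀ l < u.length, f (l + 1) ≤ f l + (2 * E + 1) := by
    intro l hl
    have h₁ := wordDist_triangle hgen (wordPath π v (f l)) (wordPath π u l)
      (wordPath π v (f (l + 1)))
    have h₂ := wordDist_triangle hgen (wordPath π u l) (wordPath π u (l + 1))
      (wordPath π v (f (l + 1)))
    have h₃ := wordDist_wordPath_le (π := π) u (Nat.le_add_right l 1) hl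
    rw [hvd _ (hf l hl.le).1 _ (hf (l + 1) hl).1] at h₁
    rw [wordDist_comm hgen hsym (wordPath π u (l + 1))] at h₂
    have := (hf l hl.le).2
    have := (hf (l + 1) hl).2
    have := Nat.dist_tri_right (f l) (f (l + 1))
    omega
  rcases lt_or_ge s (f 0) with h₀ | h₀
  · refine ⟨0, Nat.zero_le _, (hnear 0 (Nat.zero_le _) s hs).trans ?_⟩
    rw [Nat.dist_eq_sub_of_le h₀.le]
    omega
  rcases lt_or_ge (f u.length) s with h₁ | h₁
  · refine ⟨u.length, le_rfl, (hnear _ le_rfl s hs).trans ?_⟩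
    rw [Nat.dist_eq_sub_of_le_right h₁.le]
    omega
  obtain ⟨l, hl, hls, hsl⟩ := exists_le_le_add_of_succ_le_add hstep h₀ h₁
  refine ⟨l, hl, (hnear l hl s hs).trans ?_⟩
  rw [Nat.dist_eq_sub_of_le_right hls]
  omega

theorem IsGeodesicWord.exists_wordDist_wordPath_le_of_append_singleton (hgen : Generates π)
    (hsym : SymmetricGen π) {v z : List A} (hv : IsGeodesicWord π v)
    (hmv : IsMorsePath π M (wordPath π v) v.length) (hz : IsGeodesicWord π z) {a : A}
    (he : wordEval π z = wordEval π (v ++ [a])) {s : ℕ} (hs : s ≤ v.length) :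
    ∃ l ≤ z.length, wordDist π (wordPath π v s) (wordPath π z l) ≤ 3 * ⌈M 1 2⌉₊ + 2 := by
  obtain ⟨b, hb⟩ := hsym a
  have hzb : wordEval π (z ++ [b]) = wordEval π v := by
    rw [wordEval_append, he]
    simp [wordEval, hb, mul_assoc]
  obtain ⟨l, hl, hd⟩ := hv.exists_wordDist_wordPath_le hgen hsym hmv
    (by simpa using hz.isDiscreteQG_append hgen hsym [b]) hzb hs
  rcases le_or_gt l z.length with hlz | hlz
  · exact ⟨l, hlz, by rw [← wordPath_append_of_le π hlz (v := [b])]; omega⟩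
  · have h₁ := wordDist_triangle hgen (wordPath π v s) (wordPath π (z ++ [b]) l)
      (wordPath π (z ++ [b]) z.length)
    have h₂ := wordDist_wordPath_le (π := π) (z ++ [b]) hlz.le hl
    rw [wordDist_comm hgen hsym (wordPath π (z ++ [b]) l)] at h₁
    rw [wordPath_append_of_le π le_rfl] at h₁ h₂
    have : l ≤ z.length + 1 := by simpa using hl
    exact ⟨z.length, le_rfl, by omega⟩

theorem IsGeodesicWord.wordDist_wordPath_le_of_isMorsePath (hgen : Generates π)
    (hsym : SymmetricGen π) {U V : List A} (hU : IsGeodesicWord π U)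
    (hmU : IsMorsePath π M (wordPath π U) U.length) (hV : IsGeodesicWord π V)
    (he : wordEval π V = wordEval π U) {t : ℕ} (ht : t ≤ U.length) :
    wordDist π (wordPath π U t) (wordPath π V t) ≤ 2 * (3 * ⌈M 1 2⌉₊ + 1) := by
  have hlen : U.length = V.length := le_antisymm (hU.length_le he) (hV.length_le he.symm)
  obtain ⟨l, hl, hd⟩ := hU.exists_wordDist_wordPath_le hgen hsym hmU
    (by exact_mod_cast hV.isDiscreteQG hgen hsym 2) he ht
  have h₁ := wordDist_triangle hgen 1 (wordPath π U t) (wordPath π V l)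
  have h₂ := wordDist_triangle hgen 1 (wordPath π V l) (wordPath π U t)
  simp only [wordDist_one_left, hU.wordLength_wordPath hgen ht,
    hV.wordLength_wordPath hgen hl] at h₁ h₂
  rw [wordDist_comm hgen hsym (wordPath π V l)] at h₂
  have h₃ := wordDist_triangle hgen (wordPath π U t) (wordPath π V l) (wordPath π V t)
  rw [hV.isDiscreteGeodesic hgen hsym l hl t (hlen ▸ ht)] at h₃
  unfold Nat.dist at h₃
  omega

end MorseGeodesics

section LocalMorseWords

variable {G : Type} [Group G] {A : Type} {π : A → G} {M : MorseGauge} {B : ℝ}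

theorem isMorsePath_wordPath_append_append_iff (u s v : List A) :
    IsMorsePath π M (fun t => wordPath π (u ++ s ++ v) (u.length + t)) s.length ↔
      IsMorsePath π M (wordPath π s) s.length := by
  have hpath : ∀ t ≤ s.length,
      wordPath π (u ++ s ++ v) (u.length + t) = wordEval π u * wordPath π s t := by
    intro t ht
    rw [List.append_assoc, wordPath_append_length_add, wordPath_append_of_le π ht]
  rw [← isMorsePath_mul_left_iff (q := wordPath π s) (wordEval π u)]
  exact ⟨fun h => h.congr hpath, fun h => h.congr fun t ht => (hpath t ht).symm⟩

theorem isLocalMorseWord_iff_infix {w : List A} :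
    IsLocalMorseWord π M B w ↔
      ∀ s, s <:+: w → (s.length : ℝ) ≤ B → IsMorsePath π M (wordPath π s) s.length := by
  constructor
  · rintro h s ⟨u, v, rfl⟩ hsB
    have := h u.length (u ++ s).length (by simp) (by simp)
      (by simp only [List.length_append, Nat.cast_add]; linarith)
    rw [List.length_append, Nat.add_sub_cancel_left] at this
    exact (isMorsePath_wordPath_append_append_iff u s v).mp this
  · intro h i j hij hj hB
    obtain ⟨u, s, v, rfl, rfl, rfl⟩ := List.exists_eq_append_append_of_le hij hj
    rw [List.length_append, Nat.add_sub_cancel_left]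
    refine (isMorsePath_wordPath_append_append_iff u s v).mpr
      (h s (List.infix_append u s v) ?_)
    simpa only [List.length_append, Nat.cast_add, add_sub_cancel_left] using hB

theorem IsLocalMorseWord.infix {w s : List A} (hw : IsLocalMorseWord π M B w) (hs : s <:+: w) :
    IsLocalMorseWord π M B s :=
  isLocalMorseWord_iff_infix.mpr fun t ht => isLocalMorseWord_iff_infix.mp hw t (ht.trans hs)

/-- A factor of `w' ++ x` of length at most `K` either lies in `w'` or lies in the last `K`
letters of `w'` followed by `x`, which is also a factor of `w ++ x`. -/
theorem IsLocalMorseWord.append_of_drop_eq {K : ℕ} (hK : B ≤ K) {w w' x : List A}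
    (hwx : IsLocalMorseWord π M B (w ++ x)) (hw' : IsLocalMorseWord π M B w')
    (htail : w.drop (w.length - K) = w'.drop (w'.length - K)) :
    IsLocalMorseWord π M B (w' ++ x) := by
  rw [isLocalMorseWord_iff_infix] at *
  intro s hs hsB
  rcases List.infix_append_iff.mp hs with h | h | ⟨l₁, l₂, rfl, h₁, h₂⟩
  · exact hw' s h hsB
  · exact hwx s (List.infix_append_of_infix_right h) hsB
  · have hl₁ : l₁.length ≤ K := by
      have : (l₁ ++ l₂).length ≤ K := by exact_mod_cast hsB.trans hK
      rw [List.length_append] at this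
      omega
    have : l₁ <:+ w.drop (w.length - K) := by
      rw [htail]
      refine List.suffix_of_suffix_length_le h₁ (List.drop_suffix _ w') ?_
      have := h₁.length_le
      simp only [List.length_drop]
      omega
    exact hwx _ (List.infix_append_iff.mpr
      (Or.inr (Or.inr ⟨l₁, l₂, rfl, this.trans (List.drop_suffix _ w), h₂⟩))) hsB

end LocalMorseWords

section MorseLanguage

variable {G : Type} [Group G] {A : Type} {π : A → G} {M M' : MorseGauge} {B : ℝ}

variable (π) in
def morseLanguage (M : MorseGauge) (B : ℝ) : Language A :=
  {w | IsGeodesicWord π w ∧ IsLocalMorseWord π M B w}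

variable (π) in
def wordBall (R : ℕ) : Set G := {g | wordLength π g ≤ R}

variable (π) in
noncomputable def lengthProfile (R : ℕ) (g : G) : wordBall π R → ℤ :=
  fun h => (wordLength π (g * h) : ℤ) - wordLength π g

theorem finite_wordBall [Finite A] (hgen : Generates π) (R : ℕ) : (wordBall π R).Finite := by
  refine ((List.finite_length_le A R).image (wordEval π)).subset fun g hg => ?_
  obtain ⟨w, hw, rfl⟩ := exists_isGeodesicWord hgen g
  exact ⟨w, hw.trans_le hg, rfl⟩

theorem finite_range_lengthProfile [Finite A] (hgen : Generates π) (hsym : SymmetricGen π)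
    (R : ℕ) : (Set.range (lengthProfile π R)).Finite := by
  have : Finite (wordBall π R) := (finite_wordBall hgen R).to_subtype
  refine (Set.Finite.pi fun _ => Set.finite_Icc (-(R : ℤ)) R).subset ?_
  rintro _ ⟨g, rfl⟩ ⟨h, hh⟩ -
  have h₁ := wordLength_mul_le hgen g h
  have h₂ := wordLength_mul_le hgen (g * h) h⁻¹
  rw [mul_inv_cancel_right, wordLength_inv hgen hsym] at h₂
  simp only [lengthProfile, wordBall, Set.mem_ofPred_eq, Set.mem_Icc] at hh ⊢
  omega

theorem mem_morseLanguage_of_infix (hgen : Generates π) {w s : List A}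
    (hw : w ∈ morseLanguage π M B) (hs : s <:+: w) : s ∈ morseLanguage π M B :=
  ⟨hw.1.infix hgen hs, hw.2.infix hs⟩

/-- If `w' ++ y ++ [a]` were not geodesic, a geodesic `z` to its endpoint passes within `R` of
`w'` (by the Morse property of `w' ++ y`), say at `z l`. The equal profiles give
`|w̄ w̄'⁻¹ (z l)| = |w| - |w'| + l`, so the endpoint of `w ++ y ++ [a]` would have length at most
`|w| + |z| - |w'| < |w| + |y| + 1`. -/
theorem isGeodesicWord_append_singleton_of_lengthProfile_eq (hgen : Generates π)
    (hsym : SymmetricGen π) {R : ℕ} (hR : 3 * ⌈M 1 2⌉₊ + 2 ≤ R) {w w' y : List A} (a : A)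
    (hprof : lengthProfile π R (wordEval π w) = lengthProfile π R (wordEval π w'))
    (hw'y : IsGeodesicWord π (w' ++ y))
    (hm : IsMorsePath π M (wordPath π (w' ++ y)) (w' ++ y).length)
    (hwya : IsGeodesicWord π (w ++ y ++ [a])) : IsGeodesicWord π (w' ++ y ++ [a]) := by
  rw [isGeodesicWord_iff_length_le]
  by_contra! hlt
  obtain ⟨z, hz, hze⟩ := exists_isGeodesicWord hgen (wordEval π (w' ++ y ++ [a]))
  obtain ⟨l, hl, hd⟩ := hw'y.exists_wordDist_wordPath_le_of_append_singleton hgen hsym hm hz hze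
    (s := w'.length) (by simp)
  rw [wordPath_append_of_le π le_rfl, wordPath_of_length_le π le_rfl] at hd
  have hprof' := congrFun hprof ⟨(wordEval π w')⁻¹ * wordPath π z l, hd.trans hR⟩
  simp only [lengthProfile, mul_inv_cancel_left] at hprof'
  have hsplit : wordEval π (w ++ y ++ [a]) =
      (wordEval π w * ((wordEval π w')⁻¹ * wordPath π z l)) *
        ((wordPath π z l)⁻¹ * wordPath π z z.length) := by
    rw [wordPath_of_length_le π le_rfl, hze]
    simp only [wordEval_append]
    group
  have hshort := wordLength_mul_le hgen (wordEval π w * ((wordEval π w')⁻¹ * wordPath π z l))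
    ((wordPath π z l)⁻¹ * wordPath π z z.length)
  rw [← hsplit, ← wordDist, hz.wordDist_wordPath hgen hl le_rfl] at hshort
  have hw : IsGeodesicWord π w :=
    hwya.infix hgen (List.infix_append_left.trans List.infix_append_left)
  have hw' : IsGeodesicWord π w' := hw'y.infix hgen List.infix_append_left
  rw [hz.wordLength_wordPath hgen hl, ← hw, ← hw'] at hprof'
  rw [← hwya] at hshort
  rw [← hze, ← hz] at hlt
  simp only [List.length_append, List.length_singleton] at hshort hlt
  omega

theorem append_mem_morseLanguage_of_lengthProfile_eq (hgen : Generates π) (hsym : SymmetricGen π)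
    (hloc : ∀ w : List A, IsGeodesicWord π w → IsLocalMorseWord π M B w →
      IsMorsePath π M' (wordPath π w) w.length)
    {K R : ℕ} (hK : B ≤ K) (hR : 3 * ⌈M' 1 2⌉₊ + 2 ≤ R) {w w' : List A}
    (hw' : w' ∈ morseLanguage π M B) (htail : w.drop (w.length - K) = w'.drop (w'.length - K))
    (hprof : lengthProfile π R (wordEval π w) = lengthProfile π R (wordEval π w'))
    {x : List A} (hx : w ++ x ∈ morseLanguage π M B) : w' ++ x ∈ morseLanguage π M B := by
  induction x using List.reverseRecOn with
  | nil => simpa using hw'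
  | append_singleton y a ih =>
    have hw'y := ih (mem_morseLanguage_of_infix hgen hx
      (by rw [← List.append_assoc]; exact List.infix_append_left))
    have hlm := hx.2.append_of_drop_eq hK hw'.2 htail
    rw [← List.append_assoc] at hx hlm ⊢
    exact ⟨isGeodesicWord_append_singleton_of_lengthProfile_eq hgen hsym hR a hprof hw'y.1
      (hloc _ hw'y.1 hw'y.2) hx.1, hlm⟩

theorem isRegular_morseLanguage [Finite A] (hgen : Generates π) (hsym : SymmetricGen π)
    (hloc : ∀ w : List A, IsGeodesicWord π w → IsLocalMorseWord π M B w →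
      IsMorsePath π M' (wordPath π w) w.length) :
    (morseLanguage π M B).IsRegular := by
  set K := ⌈B⌉₊
  set R := 3 * ⌈M' 1 2⌉₊ + 2
  refine Language.isRegular_of_finite_range (fun w => if w ∈ morseLanguage π M B then
    some (w.drop (w.length - K), lengthProfile π R (wordEval π w)) else none) ?_ ?_
  · refine ((((List.finite_length_le A K).prod (finite_range_lengthProfile hgen hsym R)).image
      some).insert none).subset ?_
    rintro _ ⟨w, rfl⟩
    dsimp only
    split_ifs
    · exact Or.inr ⟨_, ⟨by simp only [Set.mem_ofPred_eq, List.length_drop]; omega, _, rfl⟩, rfl⟩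
    · exact Or.inl rfl
  · intro w w' x h hx
    have hw := mem_morseLanguage_of_infix hgen hx List.infix_append_left
    simp only [if_pos hw] at h
    split_ifs at h with hw'
    obtain ⟨htail, hprof⟩ := Prod.mk.inj (Option.some.inj h)
    exact append_mem_morseLanguage_of_lengthProfile_eq hgen hsym hloc (Nat.le_ceil B) le_rfl hw'
      htail hprof hx

end MorseLanguage

section EqualityLanguage

variable {G : Type} [Group G] {A : Type} {π : A → G}

variable (π) in
def equalityLanguage (L : Language A) : Language (A × A) :=
  {p | p.map Prod.fst ∈ L ∧ p.map Prod.snd ∈ L ∧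
    wordEval π (p.map Prod.fst) = wordEval π (p.map Prod.snd)}

/-- A viable prefix `p = (u, v)` is determined, up to its continuations, by the left quotients
of `L` by `u` and `v` and by the difference `u⁻¹ v`, which ranges over `S`. -/
theorem isRegular_equalityLanguage {L : Language A} (hL : L.IsRegular) {S : Set G}
    (hS : S.Finite) (hfellow : ∀ p q, p ++ q ∈ equalityLanguage π L →
      (wordEval π (p.map Prod.fst))⁻¹ * wordEval π (p.map Prod.snd) ∈ S) :
    (equalityLanguage π L).IsRegular := by
  refine Language.isRegular_of_finite_range (fun p => if ∃ q, p ++ q ∈ equalityLanguage π L then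
    some (L.leftQuotient (p.map Prod.fst), L.leftQuotient (p.map Prod.snd),
      (wordEval π (p.map Prod.fst))⁻¹ * wordEval π (p.map Prod.snd)) else none) ?_ ?_
  · have hq := hL.finite_range_leftQuotient
    refine (((hq.prod (hq.prod hS)).image some).insert none).subset ?_
    rintro _ ⟨p, rfl⟩
    dsimp only
    split_ifs with hp
    · obtain ⟨q, hq⟩ := hp
      exact Or.inr ⟨_, ⟨⟨_, rfl⟩, ⟨_, rfl⟩, hfellow p q hq⟩, rfl⟩
    · exact Or.inl rfl
  · intro p p' q h hq
    simp only [if_pos (⟨q, hq⟩ : ∃ q, p ++ q ∈ equalityLanguage π L)] at h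
    split_ifs at h with hp'
    obtain ⟨h₁, h₂, h₃⟩ : _ ∧ _ ∧ _ := by simpa using h
    obtain ⟨hq₁, hq₂, hq₃⟩ := hq
    simp only [List.map_append, wordEval_append] at hq₁ hq₂ hq₃
    refine ⟨?_, ?_, ?_⟩
    · rw [List.map_append, ← Language.mem_leftQuotient, ← h₁]
      exact hq₁
    · rw [List.map_append, ← Language.mem_leftQuotient, ← h₂]
      exact hq₂
    · have : wordEval π (q.map Prod.fst) = (wordEval π (p.map Prod.fst))⁻¹ *
          wordEval π (p.map Prod.snd) * wordEval π (q.map Prod.snd) := by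
        rw [mul_assoc, ← hq₃, inv_mul_cancel_left]
      rw [List.map_append, List.map_append, wordEval_append, wordEval_append, this, h₃,
        ← mul_assoc, mul_inv_cancel_left]

theorem inv_mul_mem_wordBall_of_append_mem {M M' : MorseGauge} {B : ℝ} (hgen : Generates π)
    (hsym : SymmetricGen π)
    (hloc : ∀ w : List A, IsGeodesicWord π w → IsLocalMorseWord π M B w →
      IsMorsePath π M' (wordPath π w) w.length)
    {p q : List (A × A)} (h : p ++ q ∈ equalityLanguage π (morseLanguage π M B)) :
    (wordEval π (p.map Prod.fst))⁻¹ * wordEval π (p.map Prod.snd) ∈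
      wordBall π (2 * (3 * ⌈M' 1 2⌉₊ + 1)) := by
  obtain ⟨h₁, h₂, he⟩ := h
  have := h₁.1.wordDist_wordPath_le_of_isMorsePath hgen hsym (hloc _ h₁.1 h₁.2) h₂.1 he.symm
    (t := p.length) (by simp)
  rwa [List.map_append, List.map_append, wordPath_append_of_le π (by simp),
    wordPath_append_of_le π (by simp), wordPath_of_length_le π (by simp),
    wordPath_of_length_le π (by simp)] at this

end EqualityLanguage

theorem regular_equality_recognizer_general {G : Type} [Group G] {A : Type} [Fintype A]
    (π : A → G) (hgen : Generates π) (hsym : SymmetricGen π)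
    (M M' : MorseGauge) (B : ℝ)
    (hloc : ∀ w : List A, IsGeodesicWord π w → IsLocalMorseWord π M B w →
      IsMorsePath π M' (wordPath π w) w.length) :
    Language.IsRegular
      ({p : List (A × A) |
        (IsGeodesicWord π (p.map Prod.fst) ∧ IsLocalMorseWord π M B (p.map Prod.fst)) ∧
        (IsGeodesicWord π (p.map Prod.snd) ∧ IsLocalMorseWord π M B (p.map Prod.snd)) ∧
        wordEval π (p.map Prod.fst) = wordEval π (p.map Prod.snd)} : Language (A × A)) :=
  isRegular_equalityLanguage (isRegular_morseLanguage hgen hsym hloc) (finite_wordBall hgen _)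
    fun _ _ h => inv_mul_mem_wordBall_of_append_mem hgen hsym hloc h

/-- If the Cayley graph of `G` is Morse local-to-global, then
the language `Q_M` over `A × A` of pairs of words of `L_M` representing the
same group element is regular. -/
theorem regular_equality_recognizer {G : Type} [Group G] {A : Type} [Fintype A]
    (π : A → G) (hgen : Generates π) (hsym : SymmetricGen π)
    (hltg : MorseLocalToGlobal π)
    (M M' : MorseGauge) (B : ℝ) (hB : 0 ≤ B)
    (hloc : ∀ w : List A, IsGeodesicWord π w → IsLocalMorseWord π M B w →
      IsMorsePath π M' (wordPath π w) w.length) :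
    Language.IsRegular
      ({p : List (A × A) |
        (IsGeodesicWord π (p.map Prod.fst) ∧ IsLocalMorseWord π M B (p.map Prod.fst)) ∧
        (IsGeodesicWord π (p.map Prod.snd) ∧ IsLocalMorseWord π M B (p.map Prod.snd)) ∧
        wordEval π (p.map Prod.fst) = wordEval π (p.map Prod.snd)} : Language (A × A)) :=
  regular_equality_recognizer_general π hgen hsym M M' B hloc
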